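/- Define the edge-labeling F on covering relations of R_n by F(x,y) = (a_i, b_i) if y covers x by changing entry i from a_i to b_i (type 1), and F(x,y) = (a_i, a_j) if y covers x by swapping entries a_i < a_j with i < j (type 2), with labels ordered lexicographically in {0,...,n}×{0,...,n}. Then in every interval [x,y] of R_n, the maximal chain whose label sequence is lexicographically smallest has weakly increasing labels. -/

import Mathlib

open Finset

variable {n : ℕ}

/-- An element of the rook monoid `R_n` in one-line notation: a sequence of
entries in `{0,...,n}` whose nonzero entries are pairwise distinct. -/
def IsRook (n : ℕ) (a : Fin n → ℕ) : Prop :=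
  (∀ i, a i ≤ n) ∧ ∀ i j, a i ≠ 0 → a i = a j → i = j

/-- number of inversions -/
def rinv (a : Fin n → ℕ) : ℕ :=
  ((univ ×ˢ univ).filter fun p : Fin n × Fin n => p.1 < p.2 ∧ a p.2 < a p.1).card

/-- number of coinversion pairs -/
def rcoinv (a : Fin n → ℕ) : ℕ :=
  ((univ ×ˢ univ).filter fun p : Fin n × Fin n => p.1 < p.2 ∧ 0 < a p.1 ∧ a p.1 < a p.2).card

/-- the length function ℓ -/
def rlen (a : Fin n → ℕ) : ℕ := (∑ i, a i) + rinv a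

/-- type 1 generating relation: increase a single entry -/
def Step1 (a b : Fin n → ℕ) : Prop := ∃ i, a i < b i ∧ ∀ j, j ≠ i → a j = b j

/-- type 2 generating relation: swap two entries, larger one first -/
def Step2 (a b : Fin n → ℕ) : Prop :=
  ∃ i j, i < j ∧ a i < a j ∧ b i = a j ∧ b j = a i ∧ ∀ k, k ≠ i → k ≠ j → a k = b k

/-- the Bruhat-Chevalley-Renner order on `R_n` -/
def RookLe (n : ℕ) (a b : Fin n → ℕ) : Prop :=
  Relation.ReflTransGen (fun x y => IsRook n x ∧ IsRook n y ∧ (Step1 x y ∨ Step2 x y)) a b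

def RookLt (n : ℕ) (a b : Fin n → ℕ) : Prop := RookLe n a b ∧ a ≠ b

/-- covering relation of the Bruhat-Chevalley-Renner order -/
def RookCov (n : ℕ) (a b : Fin n → ℕ) : Prop :=
  RookLt n a b ∧ ∀ z, RookLt n a z → RookLt n z b → False

/-- the edge labeling `F` on covering relations -/
noncomputable def Flabel (a b : Fin n → ℕ) : ℕ × ℕ := by
  classical
  exact if h : ∃ i, a i < b i ∧ ∀ j, j ≠ i → a j = b j then (a h.choose, b h.choose)
  else if h2 : ∃ p : Fin n × Fin n, p.1 < p.2 ∧ a p.1 < a p.2 ∧ b p.1 = a p.2 ∧ b p.2 = a p.1 ∧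
      ∀ k, k ≠ p.1 → k ≠ p.2 → a k = b k then (a h2.choose.1, a h2.choose.2)
  else (0, 0)

/-- lexicographic (strict) order on labels -/
def pairLt (p q : ℕ × ℕ) : Prop := p.1 < q.1 ∨ (p.1 = q.1 ∧ p.2 < q.2)

def pairLe (p q : ℕ × ℕ) : Prop := p = q ∨ pairLt p q

/-- lexicographic comparison of label sequences -/
def lexLe (l m : List (ℕ × ℕ)) : Prop := l = m ∨ List.Lex pairLt l m

/-- the Jordan-Hölder sequence of labels of a chain -/
noncomputable def labels (c : List (Fin n → ℕ)) : List (ℕ × ℕ) :=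
  List.zipWith Flabel c c.tail

/-- a maximal chain in the interval `[x,y]` -/
def RookMaxChain (n : ℕ) (x y : Fin n → ℕ) (c : List (Fin n → ℕ)) : Prop :=
  c.Chain' (RookCov n) ∧ c.head? = some x ∧ c.getLast? = some y

/-!
`rlen a = ∑ aᵢ + rinv a` is a rank function for the Bruhat–Chevalley–Renner order: every generating
step raises it, and a step that is a cover raises it by exactly one, since otherwise an
intermediate element can be written down. Hence two generating steps `x → v → y` with
`rlen y = rlen x + 2` are automatically a chain of covers.

Every step is either a raise `update x i w` or a swap `x ∘ Equiv.swap j k`, and its label is the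
pair (old value, new value) at the leftmost changed position. If `x ⋖ u ⋖ y` has a descent
`F(u, y) < F(x, u)`, a case analysis on the shapes of the two steps and the overlap of their
positions yields a chain `x ⋖ v ⋖ y` with `F(x, v) < F(x, u)`. So a chain with a descent is never
lexicographically smallest.
-/

open Function

theorem IsRook.comp_perm {a : Fin n → ℕ} (ha : IsRook n a) (σ : Equiv.Perm (Fin n)) :
    IsRook n (a ∘ σ) :=
  ⟨fun k => ha.1 (σ k), fun _ _ h0 h => σ.injective (ha.2 _ _ h0 h)⟩

theorem IsRook.update {a : Fin n → ℕ} {i : Fin n} {w : ℕ} (ha : IsRook n a) (hw : w ≤ n)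
    (hfresh : ∀ k ≠ i, a k ≠ w) : IsRook n (Function.update a i w) := by
  refine ⟨fun k => ?_, fun k l h0 h => ?_⟩
  · rcases eq_or_ne k i with rfl | hk
    · simpa
    · simpa [hk] using ha.1 k
  · have := ha.2 k l
    grind [update_apply]

theorem IsRook.ne_of_ne {a : Fin n → ℕ} {i k : Fin n} (ha : IsRook n a) (h0 : a i ≠ 0)
    (hk : k ≠ i) : a k ≠ a i :=
  fun h => hk (ha.2 k i (h ▸ h0) h)

theorem IsRook.update_ne {a : Fin n → ℕ} {i k : Fin n} {w : ℕ}
    (hb : IsRook n (Function.update a i w)) (hw : w ≠ 0) (hk : k ≠ i) : a k ≠ w := by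
  simpa [hk] using hb.ne_of_ne (by simpa) hk

section NormalForms
variable {a b : Fin n → ℕ} {i j : Fin n} {w : ℕ}

theorem Step1.exists_eq_update (h : Step1 a b) : ∃ i w, a i < w ∧ b = update a i w := by
  obtain ⟨i, hi, hoff⟩ := h
  refine ⟨i, b i, hi, funext fun k => ?_⟩
  rcases eq_or_ne k i with rfl | hk
  · simp
  · simp [hk, hoff k hk]

theorem Step2.exists_eq_comp_swap (h : Step2 a b) :
    ∃ i j, i < j ∧ a i < a j ∧ b = a ∘ Equiv.swap i j := by
  obtain ⟨i, j, hij, hlt, hbi, hbj, hoff⟩ := h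
  refine ⟨i, j, hij, hlt, funext fun k => ?_⟩
  have := hoff k
  grind

theorem step1_update (h : a i < w) : Step1 a (update a i w) :=
  ⟨i, by simpa, fun _ hk => by simp [hk]⟩

theorem step2_comp_swap (hij : i < j) (h : a i < a j) : Step2 a (a ∘ Equiv.swap i j) :=
  ⟨i, j, hij, h, by simp, by simp, fun k hi hj => by simp [Equiv.swap_apply_of_ne_of_ne hi hj]⟩

theorem flabel_update (h : a i < w) : Flabel a (update a i w) = (a i, w) := by
  have hex : ∃ m, a m < update a i w m ∧ ∀ k, k ≠ m → a k = update a i w k :=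
    ⟨i, by simpa, fun _ hk => by simp [hk]⟩
  rw [Flabel, dif_pos hex]
  obtain ⟨hc, hoff⟩ := hex.choose_spec
  have hi : hex.choose = i := by
    by_contra hne
    exact h.ne (by simpa using hoff i (Ne.symm hne))
  simp [hi]

theorem flabel_comp_swap (hij : i < j) (h : a i < a j) :
    Flabel a (a ∘ Equiv.swap i j) = (a i, a j) := by
  set b := a ∘ Equiv.swap i j with hb
  have hmoved : ∀ k, a k ≠ b k → k = i ∨ k = j := by
    intro k hk
    by_cases hki : k = i
    · exact .inl hki
    by_cases hkj : k = j
    · exact .inr hkj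
    simp [hb, Equiv.swap_apply_of_ne_of_ne hki hkj] at hk
  have hno : ¬ ∃ m, a m < b m ∧ ∀ k, k ≠ m → a k = b k := by
    rintro ⟨m, -, hoff⟩
    have := hoff i
    have := hoff j
    grind
  have hex : ∃ p : Fin n × Fin n, p.1 < p.2 ∧ a p.1 < a p.2 ∧ b p.1 = a p.2 ∧ b p.2 = a p.1 ∧
      ∀ k, k ≠ p.1 → k ≠ p.2 → a k = b k :=
    ⟨(i, j), hij, h, by simp [hb], by simp [hb],
      fun k hi hj => by simp [hb, Equiv.swap_apply_of_ne_of_ne hi hj]⟩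
  rw [Flabel, dif_neg hno, dif_pos hex]
  obtain ⟨h1, h2, h3, h4, -⟩ := hex.choose_spec
  have hp1 := hmoved hex.choose.1 (by omega)
  have hp2 := hmoved hex.choose.2 (by omega)
  rcases hp1 with hp1 | hp1 <;> rcases hp2 with hp2 | hp2 <;> rw [hp1, hp2] at h1 ⊢ <;>
    first | exact absurd h1 (lt_irrefl _) | exact absurd h1 (lt_asymm hij)

end NormalForms

def sortedPairs (n : ℕ) : Finset (Fin n × Fin n) :=
  (univ ×ˢ univ).filter fun p => p.1 < p.2

theorem mem_sortedPairs {p : Fin n × Fin n} : p ∈ sortedPairs n ↔ p.1 < p.2 := by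
  simp [sortedPairs]

def invIndicator (a : Fin n → ℕ) (p : Fin n × Fin n) : ℕ :=
  if a p.2 < a p.1 then 1 else 0

theorem rinv_eq_sum (a : Fin n → ℕ) : rinv a = ∑ p ∈ sortedPairs n, invIndicator a p := by
  rw [rinv, card_filter, sortedPairs, sum_filter]
  refine sum_congr rfl fun p _ => ?_
  by_cases h : p.1 < p.2 <;> simp [h, invIndicator]

section Raise
variable {a : Fin n → ℕ} {i : Fin n} {w : ℕ}

/-- The pairs `(k, i)`, `k < i`, whose inversion disappears when `a i` is raised to `w`. -/
def raisedPast (a : Fin n → ℕ) (i : Fin n) (w : ℕ) : Finset (Fin n × Fin n) :=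
  (sortedPairs n).filter fun p => p.2 = i ∧ a i < a p.1 ∧ a p.1 < w

theorem card_raisedPast_eq_sum (a : Fin n → ℕ) (i : Fin n) (w : ℕ) :
    #(raisedPast a i w) =
      ∑ p ∈ sortedPairs n, if p.2 = i ∧ a i < a p.1 ∧ a p.1 < w then 1 else 0 :=
  card_filter _ _

theorem card_raisedPast_le (ha : IsRook n a) : #(raisedPast a i w) ≤ w - a i - 1 := by
  rw [← Nat.card_Ioo]
  refine card_le_card_of_injOn (fun p => a p.1) (fun p hp => ?_) fun p hp q hq hpq => ?_
  · simp only [raisedPast, coe_filter, Set.mem_ofPred_eq] at hp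
    simp [hp.2.2]
  · simp only [raisedPast, coe_filter, Set.mem_ofPred_eq] at hp hq
    exact Prod.ext (ha.2 _ _ (by omega) hpq) (hp.2.1.trans hq.2.1.symm)

theorem card_raisedPast_eq (ha : IsRook n a)
    (hfill : ∀ v, a i < v → v < w → ∃ k < i, a k = v) : #(raisedPast a i w) = w - a i - 1 := by
  refine (card_raisedPast_le ha).antisymm ?_
  rw [← Nat.card_Ioo]
  refine card_le_card_of_surjOn (fun p => a p.1) fun v hv => ?_
  obtain ⟨k, hk, rfl⟩ := hfill v (mem_Ioo.1 hv).1 (mem_Ioo.1 hv).2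
  have hv := mem_Ioo.1 hv
  exact ⟨(k, i), by simp [raisedPast, sortedPairs, hk, hv.1, hv.2], rfl⟩

theorem rinv_le_rinv_update (hb : IsRook n (update a i w)) (h : a i < w) :
    rinv a ≤ rinv (update a i w) + #(raisedPast a i w) := by
  rw [rinv_eq_sum, rinv_eq_sum, card_raisedPast_eq_sum, ← sum_add_distrib]
  refine sum_le_sum fun p hp => ?_
  have hp := mem_sortedPairs.1 hp
  have := hb.2 p.1 i
  have := hb.2 p.2 i
  unfold invIndicator
  split_ifs <;> grind [update_apply]

theorem rinv_update_add_le (ha : IsRook n a) (h : a i < w)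
    (hfill : ∀ v, a i < v → v < w → ∃ k < i, a k = v)
    (hzero : a i = 0 → ∀ k, i < k → a k ≠ 0) :
    rinv (update a i w) + #(raisedPast a i w) ≤ rinv a := by
  rw [rinv_eq_sum, rinv_eq_sum, card_raisedPast_eq_sum, ← sum_add_distrib]
  refine sum_le_sum fun p hp => ?_
  have hp := mem_sortedPairs.1 hp
  have hinj := ha.2
  -- `hfill` and `hzero` leave no value of `[a i, w)` to the right of `i`, so no pair `(i, k)`
  -- gains an inversion
  unfold invIndicator
  split_ifs <;> grind [update_apply]

theorem sum_update_add (a : Fin n → ℕ) (i : Fin n) (w : ℕ) :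
    (∑ k, update a i w k) + a i = (∑ k, a k) + w := by
  rw [sum_update_of_mem (mem_univ i), ← add_sum_erase _ _ (mem_univ i), sdiff_singleton_eq_erase]
  ring

theorem rlen_lt_rlen_update (ha : IsRook n a) (hb : IsRook n (update a i w)) (h : a i < w) :
    rlen a < rlen (update a i w) := by
  have := sum_update_add a i w
  have := rinv_le_rinv_update hb h
  have := card_raisedPast_le (w := w) (i := i) ha
  rw [rlen, rlen]
  omega

theorem rlen_update_eq_succ (ha : IsRook n a) (hb : IsRook n (update a i w)) (h : a i < w)
    (hfill : ∀ v, a i < v → v < w → ∃ k < i, a k = v)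
    (hzero : a i = 0 → ∀ k, i < k → a k ≠ 0) :
    rlen (update a i w) = rlen a + 1 := by
  have := sum_update_add a i w
  have := rinv_le_rinv_update hb h
  have := rinv_update_add_le ha h hfill hzero
  have := card_raisedPast_eq ha hfill
  rw [rlen, rlen]
  omega

end Raise

section Swap
variable {a : Fin n → ℕ} {i j : Fin n}

/-- An involution of `sortedPairs n` along which the inversion count of `a ∘ Equiv.swap i j` is
compared termwise with that of `a`. -/
def swapSorted (i j : Fin n) (p : Fin n × Fin n) : Fin n × Fin n :=
  if Equiv.swap i j p.1 < Equiv.swap i j p.2 then (Equiv.swap i j p.1, Equiv.swap i j p.2) else p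

theorem swapSorted_mem {p : Fin n × Fin n} (hp : p ∈ sortedPairs n) :
    swapSorted i j p ∈ sortedPairs n := by
  unfold swapSorted
  split_ifs with h
  · exact mem_sortedPairs.2 h
  · exact hp

theorem swapSorted_swapSorted {p : Fin n × Fin n} (hp : p ∈ sortedPairs n) :
    swapSorted i j (swapSorted i j p) = p := by
  unfold swapSorted
  split_ifs with h h' <;> simp_all [mem_sortedPairs]

theorem rinv_comp_swap_eq_sum (a : Fin n → ℕ) (i j : Fin n) :
    rinv (a ∘ Equiv.swap i j) =
      ∑ p ∈ sortedPairs n, invIndicator (a ∘ Equiv.swap i j) (swapSorted i j p) := by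
  rw [rinv_eq_sum]
  exact (sum_nbij' (swapSorted i j) (swapSorted i j) (fun _ => swapSorted_mem)
    (fun _ => swapSorted_mem) (fun _ => swapSorted_swapSorted) (fun _ => swapSorted_swapSorted)
    fun _ _ => rfl).symm

theorem invIndicator_le_comp_swap (hij : i < j) (h : a i < a j) {p : Fin n × Fin n}
    (hp : p ∈ sortedPairs n) :
    invIndicator a p ≤ invIndicator (a ∘ Equiv.swap i j) (swapSorted i j p) := by
  have hp := mem_sortedPairs.1 hp
  by_cases hs : Equiv.swap i j p.1 < Equiv.swap i j p.2
  · simp only [swapSorted, if_pos hs, invIndicator, comp_apply, Equiv.swap_apply_self, le_refl]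
  · -- `p` is `(i, k)` or `(k, j)` with `i < k ≤ j`
    simp only [swapSorted, if_neg hs, invIndicator, comp_apply]
    simp only [Equiv.swap_apply_def] at hs ⊢
    split_ifs at hs ⊢ <;> grind

theorem invIndicator_eq_comp_swap (ha : IsRook n a) (hij : i < j) (h : a i < a j)
    (hgap : ∀ k, i < k → k < j → a k < a i ∨ a j ≤ a k) {p : Fin n × Fin n}
    (hp : p ∈ sortedPairs n) (hne : p ≠ (i, j)) :
    invIndicator a p = invIndicator (a ∘ Equiv.swap i j) (swapSorted i j p) := by
  have hp := mem_sortedPairs.1 hp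
  have hinj := ha.2
  by_cases hs : Equiv.swap i j p.1 < Equiv.swap i j p.2
  · simp only [swapSorted, if_pos hs, invIndicator, comp_apply, Equiv.swap_apply_self]
  · simp only [swapSorted, if_neg hs, invIndicator, comp_apply]
    simp only [Equiv.swap_apply_def] at hs ⊢
    split_ifs at hs ⊢ <;> grind

theorem invIndicator_comp_swap_self (hij : i < j) (h : a i < a j) :
    invIndicator (a ∘ Equiv.swap i j) (swapSorted i j (i, j)) = invIndicator a (i, j) + 1 := by
  simp [swapSorted, invIndicator, not_lt.2 hij.le, h, not_lt.2 h.le]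

theorem rlen_lt_rlen_comp_swap (hij : i < j) (h : a i < a j) :
    rlen a < rlen (a ∘ Equiv.swap i j) := by
  have hinv : rinv a < rinv (a ∘ Equiv.swap i j) := by
    rw [rinv_comp_swap_eq_sum, rinv_eq_sum]
    refine sum_lt_sum (fun p hp => invIndicator_le_comp_swap hij h hp)
      ⟨(i, j), mem_sortedPairs.2 hij, by rw [invIndicator_comp_swap_self hij h]; omega⟩
  have hsum : ∑ k, (a ∘ Equiv.swap i j) k = ∑ k, a k := Equiv.sum_comp (Equiv.swap i j) a
  rw [rlen, rlen]
  omega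

theorem rlen_comp_swap_eq_succ (ha : IsRook n a) (hij : i < j) (h : a i < a j)
    (hgap : ∀ k, i < k → k < j → a k < a i ∨ a j ≤ a k) :
    rlen (a ∘ Equiv.swap i j) = rlen a + 1 := by
  have hinv : rinv (a ∘ Equiv.swap i j) = rinv a + 1 := by
    have hmem : (i, j) ∈ sortedPairs n := mem_sortedPairs.2 hij
    rw [rinv_comp_swap_eq_sum, rinv_eq_sum, ← add_sum_erase _ _ hmem, ← add_sum_erase _ _ hmem,
      sum_congr rfl fun p hp => (invIndicator_eq_comp_swap ha hij h hgap
        (mem_of_mem_erase hp) (ne_of_mem_erase hp)).symm, invIndicator_comp_swap_self hij h]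
    ring
  have hsum : ∑ k, (a ∘ Equiv.swap i j) k = ∑ k, a k := Equiv.sum_comp (Equiv.swap i j) a
  rw [rlen, rlen]
  omega

end Swap

def RookStep (n : ℕ) (a b : Fin n → ℕ) : Prop :=
  IsRook n a ∧ IsRook n b ∧ (Step1 a b ∨ Step2 a b)

section Steps
variable {a b z : Fin n → ℕ} {i j : Fin n} {w : ℕ}

theorem RookStep.update (ha : IsRook n a) (hb : IsRook n (Function.update a i w)) (h : a i < w) :
    RookStep n a (Function.update a i w) :=
  ⟨ha, hb, .inl (step1_update h)⟩

theorem RookStep.comp_swap (ha : IsRook n a) (hij : i < j) (h : a i < a j) :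
    RookStep n a (a ∘ Equiv.swap i j) :=
  ⟨ha, ha.comp_perm _, .inr (step2_comp_swap hij h)⟩

theorem RookStep.rlen_lt (h : RookStep n a b) : rlen a < rlen b := by
  obtain ⟨ha, hb, h | h⟩ := h
  · obtain ⟨i, w, hw, rfl⟩ := h.exists_eq_update
    exact rlen_lt_rlen_update ha hb hw
  · obtain ⟨i, j, hij, hlt, rfl⟩ := h.exists_eq_comp_swap
    exact rlen_lt_rlen_comp_swap hij hlt

theorem RookLe.eq_or_rlen_lt (h : RookLe n a b) : a = b ∨ rlen a < rlen b := by
  induction h with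
  | refl => exact .inl rfl
  | tail _ hbc ih =>
    exact .inr (ih.elim (· ▸ RookStep.rlen_lt hbc) (·.trans (RookStep.rlen_lt hbc)))

theorem RookLt.rlen_lt (h : RookLt n a b) : rlen a < rlen b :=
  h.1.eq_or_rlen_lt.resolve_left h.2

theorem RookStep.rookLt (h : RookStep n a b) : RookLt n a b :=
  ⟨.single h, fun hab => (hab ▸ h.rlen_lt).false⟩

theorem RookCov.rookStep (h : RookCov n a b) : RookStep n a b := by
  obtain ⟨⟨hle, hne⟩, hmin⟩ := h
  rcases Relation.ReflTransGen.cases_head hle with rfl | ⟨c, hac, hcb⟩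
  · exact absurd rfl hne
  · rcases eq_or_ne c b with rfl | hcb'
    · exact hac
    · exact (hmin c (RookStep.rookLt hac) ⟨hcb, hcb'⟩).elim

theorem rookCov_of_rlen_eq (h : RookStep n a b) (hr : rlen b = rlen a + 1) : RookCov n a b :=
  ⟨h.rookLt, fun z haz hzb => by have := haz.rlen_lt; have := hzb.rlen_lt; omega⟩

theorem RookCov.eq_of_rookStep (h : RookCov n a b) (hz : RookStep n a z) (hzb : RookLe n z b) :
    z = b := by
  by_contra hne
  exact h.2 z hz.rookLt ⟨hzb, hne⟩

end Steps

section Covers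
variable {a : Fin n → ℕ} {i j : Fin n} {w : ℕ}

theorem RookCov.update_not_later (h : RookCov n a (update a i w)) {k : Fin n} (hik : i < k)
    (hk : a i < a k) : w ≤ a k := by
  by_contra hkw
  obtain ⟨ha, hb, -⟩ := h.rookStep
  have hz : IsRook n (update (a ∘ Equiv.swap i k) i w) := by
    refine (ha.comp_perm _).update (by simpa using hb.1 i) fun m hm => ?_
    rcases eq_or_ne m k with rfl | hmk
    · simp; omega
    · simpa [Equiv.swap_apply_of_ne_of_ne hm hmk] using hb.update_ne (by omega) hm
  have hb' : update a i w = update (update (a ∘ Equiv.swap i k) i w) k (a k) := by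
    ext m; grind [update_apply]
  have := h.eq_of_rookStep (RookStep.comp_swap ha hik hk)
    (.head (RookStep.update (ha.comp_perm _) hz (by simp; omega))
      (.single (hb' ▸ RookStep.update hz (hb' ▸ hb) (by simp [hik.ne']; omega))))
  have := congrFun this i
  simp at this
  omega

theorem RookCov.update_mem_range (h : RookCov n a (update a i w)) {v : ℕ} (h1 : a i < v)
    (h2 : v < w) : ∃ k, a k = v := by
  by_contra hv
  simp only [not_exists] at hv
  obtain ⟨ha, hb, -⟩ := h.rookStep
  have hz : IsRook n (update a i v) := ha.update (by have := hb.1 i; simp at this; omega)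
    fun m _ => hv m
  have hzb : RookStep n (update a i v) (update a i w) := by
    simpa using RookStep.update (i := i) (w := w) hz (by simpa using hb) (by simpa using h2)
  have := h.eq_of_rookStep (RookStep.update ha hz h1) (.single hzb)
  have := congrFun this i
  simp at this
  omega

theorem RookCov.update_fill (h : RookCov n a (update a i w)) :
    ∀ v, a i < v → v < w → ∃ k < i, a k = v := by
  intro v h1 h2
  obtain ⟨k, rfl⟩ := h.update_mem_range h1 h2
  refine ⟨k, ?_, rfl⟩
  rcases lt_trichotomy k i with hki | rfl | hik
  · exact hki
  · omega
  · exact absurd (h.update_not_later hik h1) (not_le.2 h2)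

theorem RookCov.update_zero (h : RookCov n a (update a i w)) (hw : a i < w) (h0 : a i = 0)
    {k : Fin n} (hik : i < k) : a k ≠ 0 := by
  intro hk0
  obtain ⟨ha, hb, -⟩ := h.rookStep
  have hz : IsRook n (update a k w) := by
    refine ha.update (by simpa using hb.1 i) fun m hm => ?_
    rcases eq_or_ne m i with rfl | hmi
    · omega
    · exact hb.update_ne (by omega) hmi
  have hb' : update a i w = update a k w ∘ Equiv.swap i k := by
    ext m; grind [update_apply]
  have := h.eq_of_rookStep (RookStep.update ha hz (by omega))
    (.single (hb' ▸ RookStep.comp_swap hz hik (by simp [hik.ne]; omega)))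
  have := congrFun this i
  simp [hik.ne] at this
  omega

theorem RookCov.comp_swap_gap (h : RookCov n a (a ∘ Equiv.swap i j)) {k : Fin n} (hik : i < k)
    (hkj : k < j) : a k < a i ∨ a j ≤ a k := by
  by_contra hk
  simp only [not_or, not_lt, not_le] at hk
  obtain ⟨ha, -, -⟩ := h.rookStep
  have hz := RookStep.comp_swap ha hkj hk.2
  rcases hk.1.eq_or_lt with heq | hik'
  · have hb : a ∘ Equiv.swap i j = (a ∘ Equiv.swap k j) ∘ Equiv.swap i k := by
      ext m; grind
    have := h.eq_of_rookStep hz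
      (.single (hb ▸ RookStep.comp_swap hz.2.1 hik (by grind)))
    have := congrFun this k
    grind
  · have hb : a ∘ Equiv.swap i j = ((a ∘ Equiv.swap k j) ∘ Equiv.swap i k) ∘ Equiv.swap k j := by
      ext m; grind
    have hz2 := RookStep.comp_swap hz.2.1 hik (by grind)
    have := h.eq_of_rookStep hz
      (.head hz2 (.single (hb ▸ RookStep.comp_swap hz2.2.1 hkj (by grind))))
    have := congrFun this i
    grind

theorem RookCov.rlen_eq_succ {b : Fin n → ℕ} (h : RookCov n a b) : rlen b = rlen a + 1 := by
  obtain ⟨ha, hb, hs | hs⟩ := h.rookStep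
  · obtain ⟨i, w, hw, rfl⟩ := hs.exists_eq_update
    exact rlen_update_eq_succ ha hb hw h.update_fill fun h0 _ hik => h.update_zero hw h0 hik
  · obtain ⟨i, j, hij, hlt, rfl⟩ := hs.exists_eq_comp_swap
    exact rlen_comp_swap_eq_succ ha hij hlt fun _ hik hkj => h.comp_swap_gap hik hkj

end Covers

theorem rookCov_of_rookStep_rookStep {x v y : Fin n → ℕ} (h1 : RookStep n x v)
    (h2 : RookStep n v y) (hr : rlen y = rlen x + 2) : RookCov n x v ∧ RookCov n v y := by
  have := h1.rlen_lt
  have := h2.rlen_lt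
  exact ⟨rookCov_of_rlen_eq h1 (by omega), rookCov_of_rlen_eq h2 (by omega)⟩

def HasLowerDetour (n : ℕ) (x y : Fin n → ℕ) (l : ℕ × ℕ) : Prop :=
  ∃ v, RookStep n x v ∧ RookStep n v y ∧ pairLt (Flabel x v) l

section Exchange
variable {x : Fin n → ℕ} {i i' j k : Fin n} {w w' : ℕ}

theorem hasLowerDetour_update_update (hx : IsRook n x) (hu : IsRook n (update x i w))
    (hy : IsRook n (update (update x i w) i' w')) (hw : x i < w) (hw' : update x i w i' < w')
    (hd : pairLt (update x i w i', w') (x i, w)) :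
    HasLowerDetour n x (update (update x i w) i' w') (x i, w) := by
  rcases eq_or_ne i' i with rfl | hii
  · simp only [update_self, pairLt] at hw' hd
    omega
  rw [update_of_ne hii] at hw' hd
  unfold pairLt at hd
  by_cases hpass : w' = x i
  · subst hpass
    rcases lt_or_gt_of_ne hii with hlt | hgt
    · have hy' : update (update x i w) i' (x i) = update (x ∘ Equiv.swap i' i) i w := by
        ext m; grind [update_apply]
      rw [hy'] at hy ⊢
      refine ⟨_, .comp_swap hx hlt hw', .update (hx.comp_perm _) hy (by simp; omega), ?_⟩
      rw [flabel_comp_swap hlt hw']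
      unfold pairLt; omega
    · have hv : IsRook n (update x i' w) := by
        refine hx.update (by simpa using hu.1 i) fun m hm => ?_
        rcases eq_or_ne m i with rfl | hmi
        · omega
        · exact hu.update_ne (by omega) hmi
      have hy' : update (update x i w) i' (x i) = update x i' w ∘ Equiv.swap i i' := by
        ext m; grind [update_apply]
      rw [hy'] at hy ⊢
      refine ⟨_, .update hx hv (by omega), .comp_swap hv hgt (by simp [hii.symm]; omega), ?_⟩
      rw [flabel_update (by omega)]
      unfold pairLt; omega
  · have hv : IsRook n (update x i' w') := by
      refine hx.update (by simpa using hy.1 i') fun m hm => ?_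
      rcases eq_or_ne m i with rfl | hmi
      · exact Ne.symm hpass
      · simpa [hmi] using hy.update_ne (by omega) hm
    rw [update_comm hii.symm] at hy ⊢
    refine ⟨_, .update hx hv hw', .update hv hy (by simp [hii.symm]; omega), ?_⟩
    rw [flabel_update hw']
    exact hd

theorem hasLowerDetour_update_comp_swap (hx : IsRook n x) (hu : IsRook n (update x i w))
    (hw : x i < w) (hjk : j < k) (hlt : update x i w j < update x i w k)
    (hd : pairLt (update x i w j, update x i w k) (x i, w)) :
    HasLowerDetour n x (update x i w ∘ Equiv.swap j k) (x i, w) := by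
  have hy := hu.comp_perm (Equiv.swap j k)
  rcases eq_or_ne i j with rfl | hij
  · simp only [update_self, pairLt] at hd
    omega
  rw [update_of_ne hij.symm] at hlt hd
  rcases eq_or_ne i k with rfl | hik
  · simp only [update_self, pairLt] at hd
    have hy' : update x i w ∘ Equiv.swap j i = update (x ∘ Equiv.swap j i) j w := by
      ext m; grind [update_apply]
    rw [hy'] at hy ⊢
    refine ⟨_, .comp_swap hx hjk (by omega), .update (hx.comp_perm _) hy (by simp; omega), ?_⟩
    rw [flabel_comp_swap hjk (by omega)]
    unfold pairLt; omega
  · rw [update_of_ne hik.symm] at hlt hd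
    have hy' : update x i w ∘ Equiv.swap j k = update (x ∘ Equiv.swap j k) i w := by
      ext m; grind [update_apply]
    rw [hy'] at hy ⊢
    refine ⟨_, .comp_swap hx hjk hlt,
      .update (hx.comp_perm _) hy (by simp [Equiv.swap_apply_of_ne_of_ne hij hik]; omega), ?_⟩
    rw [flabel_comp_swap hjk hlt]
    exact hd

theorem hasLowerDetour_comp_swap_update (hx : IsRook n x)
    (hy : IsRook n (update (x ∘ Equiv.swap j k) i w)) (hjk : j < k) (hlt : x j < x k)
    (hw : (x ∘ Equiv.swap j k) i < w) (hd : pairLt ((x ∘ Equiv.swap j k) i, w) (x j, x k)) :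
    HasLowerDetour n x (update (x ∘ Equiv.swap j k) i w) (x j, x k) := by
  rcases eq_or_ne i j with rfl | hij
  · simp only [Function.comp_apply, Equiv.swap_apply_left, pairLt] at hd
    omega
  rcases eq_or_ne i k with rfl | hik
  · simp only [Function.comp_apply, Equiv.swap_apply_right, pairLt] at hw hd
    have hv : IsRook n (update x j w) := by
      refine hx.update (by simpa using hy.1 i) fun m hm => ?_
      rcases eq_or_ne m i with rfl | hmi
      · omega
      · simpa [Equiv.swap_apply_of_ne_of_ne hm hmi] using hy.update_ne (by omega) hmi
    have hy' : update (x ∘ Equiv.swap j i) i w = update x j w ∘ Equiv.swap j i := by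
      ext m; grind [update_apply]
    rw [hy'] at hy ⊢
    refine ⟨_, .update hx hv hw, .comp_swap hv hjk (by simp [hjk.ne']; omega), ?_⟩
    rw [flabel_update hw]
    unfold pairLt; omega
  · simp only [Function.comp_apply, Equiv.swap_apply_of_ne_of_ne hij hik] at hw hd
    have hv : IsRook n (update x i w) := by
      refine hx.update (by simpa using hy.1 i) fun m hm => ?_
      have hm' : Equiv.swap j k m ≠ i := by grind
      simpa using hy.update_ne (by omega) hm'
    have hy' : update (x ∘ Equiv.swap j k) i w = update x i w ∘ Equiv.swap j k := by
      ext m; grind [update_apply]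
    rw [hy'] at hy ⊢
    refine ⟨_, .update hx hv hw, .comp_swap hv hjk (by simp [hij.symm, hik.symm]; omega), ?_⟩
    rw [flabel_update hw]
    exact hd

theorem hasLowerDetour_of_comp_swap_comp_swap (hx : IsRook n x) {p q r s : Fin n} {l : ℕ × ℕ}
    {y : Fin n → ℕ} (hpq : p < q) (hxpq : x p < x q) (hrs : r < s)
    (hv : x (Equiv.swap p q r) < x (Equiv.swap p q s))
    (hy : y = x ∘ Equiv.swap p q ∘ Equiv.swap r s) (hl : pairLt (x p, x q) l) :
    HasLowerDetour n x y l := by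
  subst hy
  refine ⟨_, .comp_swap hx hpq hxpq, .comp_swap (hx.comp_perm _) hrs hv, ?_⟩
  rwa [flabel_comp_swap hpq hxpq]

theorem hasLowerDetour_comp_swap_comp_swap (hx : IsRook n x) {j' k' : Fin n} (hjk : j < k)
    (hlt : x j < x k) (hjk' : j' < k')
    (hlt' : (x ∘ Equiv.swap j k) j' < (x ∘ Equiv.swap j k) k')
    (hd : pairLt ((x ∘ Equiv.swap j k) j', (x ∘ Equiv.swap j k) k') (x j, x k)) :
    HasLowerDetour n x (x ∘ Equiv.swap j k ∘ Equiv.swap j' k') (x j, x k) := by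
  unfold pairLt at hd
  rcases eq_or_ne j' j with rfl | hj'j
  · simp at hd; omega
  rcases eq_or_ne j' k with rfl | hj'k
  · exact hasLowerDetour_of_comp_swap_comp_swap hx (hjk.trans hjk') (by grind) hjk (by grind)
      (by ext m; grind) (by unfold pairLt; grind)
  rcases eq_or_ne k' j with rfl | hk'j
  · exact hasLowerDetour_of_comp_swap_comp_swap hx hjk' (by grind) (hjk'.trans hjk) (by grind)
      (by ext m; grind) (by unfold pairLt; grind)
  rcases eq_or_ne k' k with rfl | hk'k
  · rcases lt_or_gt_of_ne hj'j with hlt'' | hgt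
    · exact hasLowerDetour_of_comp_swap_comp_swap hx hlt'' (by grind) hjk (by grind)
        (by ext m; grind) (by unfold pairLt; grind)
    · exact hasLowerDetour_of_comp_swap_comp_swap hx hjk' (by grind) hgt (by grind)
        (by ext m; grind) (by unfold pairLt; grind)
  · exact hasLowerDetour_of_comp_swap_comp_swap hx hjk' (by grind) hjk (by grind)
      (by ext m; grind) (by unfold pairLt; grind)

end Exchange

theorem exists_rookCov_lt_of_descent {x u y : Fin n → ℕ} (h1 : RookCov n x u)
    (h2 : RookCov n u y) (hd : pairLt (Flabel u y) (Flabel x u)) :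
    ∃ v, RookCov n x v ∧ RookCov n v y ∧ pairLt (Flabel x v) (Flabel x u) := by
  suffices h : HasLowerDetour n x y (Flabel x u) by
    obtain ⟨v, hv1, hv2, hl⟩ := h
    have := h1.rlen_eq_succ
    have := h2.rlen_eq_succ
    obtain ⟨c1, c2⟩ := rookCov_of_rookStep_rookStep hv1 hv2 (by omega)
    exact ⟨v, c1, c2, hl⟩
  obtain ⟨hx, hu, hs1 | hs1⟩ := h1.rookStep <;> obtain ⟨-, hy, hs2 | hs2⟩ := h2.rookStep
  · obtain ⟨i, w, hw, rfl⟩ := hs1.exists_eq_update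
    obtain ⟨i', w', hw', rfl⟩ := hs2.exists_eq_update
    rw [flabel_update hw'] at hd
    rw [flabel_update hw] at hd ⊢
    exact hasLowerDetour_update_update hx hu hy hw hw' hd
  · obtain ⟨i, w, hw, rfl⟩ := hs1.exists_eq_update
    obtain ⟨j, k, hjk, hlt, rfl⟩ := hs2.exists_eq_comp_swap
    rw [flabel_comp_swap hjk hlt] at hd
    rw [flabel_update hw] at hd ⊢
    exact hasLowerDetour_update_comp_swap hx hu hw hjk hlt hd
  · obtain ⟨j, k, hjk, hlt, rfl⟩ := hs1.exists_eq_comp_swap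
    obtain ⟨i, w, hw, rfl⟩ := hs2.exists_eq_update
    rw [flabel_update hw] at hd
    rw [flabel_comp_swap hjk hlt] at hd ⊢
    exact hasLowerDetour_comp_swap_update hx hy hjk hlt hw hd
  · obtain ⟨j, k, hjk, hlt, rfl⟩ := hs1.exists_eq_comp_swap
    obtain ⟨j', k', hjk', hlt', rfl⟩ := hs2.exists_eq_comp_swap
    rw [flabel_comp_swap hjk' hlt'] at hd
    rw [flabel_comp_swap hjk hlt] at hd ⊢
    exact hasLowerDetour_comp_swap_comp_swap hx hjk hlt hjk' hlt' hd

instance : Std.Asymm pairLt :=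
  ⟨fun p q h h' => by unfold pairLt at h h'; omega⟩

theorem pairLt_of_not_pairLe {p q : ℕ × ℕ} (h : ¬ pairLe p q) : pairLt q p := by
  obtain ⟨p1, p2⟩ := p
  obtain ⟨q1, q2⟩ := q
  simp only [pairLe, pairLt, Prod.mk.injEq] at *
  omega

theorem lexLe.of_cons {p : ℕ × ℕ} {l m : List (ℕ × ℕ)} (h : lexLe (p :: l) (p :: m)) :
    lexLe l m :=
  h.imp (List.cons.inj · |>.2) (List.lex_cons_iff (r := pairLt)).1

theorem not_lexLe_of_lex {l m : List (ℕ × ℕ)} (h : List.Lex pairLt m l) : ¬ lexLe l m := by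
  rintro (rfl | h')
  exacts [irrefl _ h, asymm h h']

theorem labels_cons_cons (a b : Fin n → ℕ) (l : List (Fin n → ℕ)) :
    labels (a :: b :: l) = Flabel a b :: labels (b :: l) := rfl

def IsLexMinCovChain (n : ℕ) (c : List (Fin n → ℕ)) : Prop :=
  ∀ d : List (Fin n → ℕ), d.IsChain (RookCov n) → d.head? = c.head? → d.getLast? = c.getLast? →
    lexLe (labels c) (labels d)

theorem IsLexMinCovChain.tail {a b : Fin n → ℕ} {r : List (Fin n → ℕ)}
    (hab : RookCov n a b) (h : IsLexMinCovChain n (a :: b :: r)) :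
    IsLexMinCovChain n (b :: r) := by
  rintro (_ | ⟨b', d⟩) hd hh hl
  · simp at hh
  obtain rfl : b' = b := by simpa using hh
  refine (h (a :: b' :: d) (List.isChain_cons_cons.2 ⟨hab, hd⟩) rfl ?_).of_cons
  simpa [List.getLast?_cons_cons] using hl

theorem IsLexMinCovChain.pairLe_flabel {a b c : Fin n → ℕ} {r : List (Fin n → ℕ)}
    (hab : RookCov n a b) (hbc : RookCov n b c) (hr : (c :: r).IsChain (RookCov n))
    (h : IsLexMinCovChain n (a :: b :: c :: r)) : pairLe (Flabel a b) (Flabel b c) := by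
  by_contra hd
  obtain ⟨v, hav, hvc, hlt⟩ := exists_rookCov_lt_of_descent hab hbc (pairLt_of_not_pairLe hd)
  refine not_lexLe_of_lex ?_ (h (a :: v :: c :: r)
    (List.isChain_cons_cons.2 ⟨hav, List.isChain_cons_cons.2 ⟨hvc, hr⟩⟩) rfl (by simp))
  rw [labels_cons_cons, labels_cons_cons]
  exact .rel hlt

theorem IsLexMinCovChain.isChain_labels :
    ∀ {c : List (Fin n → ℕ)}, c.IsChain (RookCov n) → IsLexMinCovChain n c →
      (labels c).IsChain pairLe
  | [], _, _ | [_], _, _ => .nil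
  | [a, b], _, _ => .singleton _
  | a :: b :: c :: r, hc, h => by
    obtain ⟨hab, hbr⟩ := List.isChain_cons_cons.1 hc
    have htail := (h.tail hab).isChain_labels hbr
    rw [labels_cons_cons] at htail ⊢
    exact List.isChain_cons_cons.2 ⟨h.pairLe_flabel hab (List.isChain_cons_cons.1 hbr).1
      (List.isChain_cons_cons.1 hbr).2, htail⟩

theorem lex_smallest_chain_is_increasing_general (n : ℕ) (x y : Fin n → ℕ)
    (c : List (Fin n → ℕ)) (hc : RookMaxChain n x y c)
    (hlex : ∀ d, RookMaxChain n x y d → lexLe (labels c) (labels d)) :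
    (labels c).Chain' pairLe := by
  obtain ⟨hch, hhead, hlast⟩ := hc
  exact IsLexMinCovChain.isChain_labels hch fun d hd hh hl =>
    hlex d ⟨hd, hh.trans hhead, hl.trans hlast⟩

theorem lex_smallest_chain_is_increasing (n : ℕ) (x y : Fin n → ℕ)
    (hx : IsRook n x) (hy : IsRook n y) (hle : RookLe n x y)
    (c : List (Fin n → ℕ)) (hc : RookMaxChain n x y c)
    (hlex : ∀ d, RookMaxChain n x y d → lexLe (labels c) (labels d)) :
    (labels c).Chain' pairLe :=
  lex_smallest_chain_is_increasing_general n x y c hc hlex
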